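/- Let H be a candidate sequence on a compact metrizable space M, let x ∈ M, and let U be an open neighborhood of x in M. Then for every ordinal γ, u_γ^H(x) = u_γ^{H|_U}(x). -/

import Mathlib

/-!
Every operation in the recursion defining `u_γ` is pointwise except the u.s.c. envelope, and the
envelope at `y` only sees the neighbourhood filter of `y`, which an open set containing `y`
does not change; transfinite induction on `γ` then gives the equality on all of `U`.
-/

open Filter Topology Set
open scoped ENNReal

/-- A candidate sequence on a topological space `M`: a nondecreasing sequence of
nonnegative functions, starting at `0`, with bounded pointwise limit. -/
structure CandidateSeq (M : Type*) [TopologicalSpace M] where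
  h : ℕ → M → ℝ
  nonneg : ∀ k x, 0 ≤ h k x
  mono : ∀ x, Monotone fun k => h k x
  zero : ∀ x, h 0 x = 0
  limFn : M → ℝ
  tendsto_limFn : ∀ x, Tendsto (fun k => h k x) atTop (𝓝 (limFn x))
  bddAbove : ∃ B : ℝ, ∀ x, limFn x ≤ B

namespace CandidateSeq

variable {M : Type*} [TopologicalSpace M]

/-- The upper semicontinuous envelope of a `[0,∞]`-valued function:
`f~(x) = limsup_{y → x} f(y)`, the limsup including the value at `x` itself. -/
noncomputable def uscEnv (f : M → ℝ≥0∞) : M → ℝ≥0∞ := fun x => Filter.limsup f (𝓝 x)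

/-- The tail functions `τ_k = h - h_k` (nonnegative, viewed in `[0,∞]`). -/
noncomputable def tau (H : CandidateSeq M) (k : ℕ) : M → ℝ≥0∞ :=
  fun x => ENNReal.ofReal (H.limFn x - H.h k x)

/-- The transfinite sequence `u_α^H` associated to a candidate sequence, defined by
transfinite recursion: `u_0 ≡ 0`; `u_{α+1} = lim_k (u_α + τ_k)~` (the envelopes are
nonincreasing in `k`, so the limit is the infimum); at limit ordinals,
`u_α = (sup_{β<α} u_β)~`. Values are taken in `[0,∞]`. -/
noncomputable def u (H : CandidateSeq M) (α : Ordinal) : M → ℝ≥0∞ :=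
  Ordinal.limitRecOn α
    (fun _ => 0)
    (fun _ v => fun x => ⨅ k : ℕ, uscEnv (fun y => v y + H.tau k y) x)
    (fun o _ ih => uscEnv (fun y => ⨆ p : {β : Ordinal // β < o}, ih p.1 p.2 y))

/-- The order of accumulation of a candidate sequence: the least ordinal `α`
with `u_α = u_{α+1}`. -/
noncomputable def orderOfAccum (H : CandidateSeq M) : Ordinal :=
  sInf {α : Ordinal | H.u α = H.u (α + 1)}

/-- The restriction `H|_S` of a candidate sequence to a subset, as a candidate
sequence on the subspace `S`. -/
def restrict (H : CandidateSeq M) (S : Set M) : CandidateSeq S where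
  h k x := H.h k x.1
  nonneg k x := H.nonneg k x.1
  mono x := H.mono x.1
  zero x := H.zero x.1
  limFn x := H.limFn x.1
  tendsto_limFn x := H.tendsto_limFn x.1
  bddAbove := H.bddAbove.imp fun B hB x => hB x.1

/-- The pullback `F ∘ π` of a candidate sequence along a map. -/
def comp {K : Type*} [TopologicalSpace K] (F : CandidateSeq K) (π : M → K) :
    CandidateSeq M where
  h k x := F.h k (π x)
  nonneg k x := F.nonneg k (π x)
  mono x := F.mono (π x)
  zero x := F.zero (π x)
  limFn x := F.limFn (π x)
  tendsto_limFn x := F.tendsto_limFn (π x)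
  bddAbove := F.bddAbove.imp fun B hB x => hB (π x)

/-- `H` uniformly dominates `F`. -/
def UnifDominates (H F : CandidateSeq M) : Prop :=
  ∀ ε : ℝ, 0 < ε → ∀ k, ∃ l, ∀ x, F.h k x ≤ H.h l x + ε

/-- Uniform equivalence of candidate sequences. -/
def UnifEquiv (H F : CandidateSeq M) : Prop :=
  UnifDominates H F ∧ UnifDominates F H

theorem u_zero (H : CandidateSeq M) : H.u 0 = fun _ => 0 :=
  Ordinal.limitRecOn_zero _ _ _

theorem u_succ (H : CandidateSeq M) (α : Ordinal) :
    H.u (α + 1) = fun x => ⨅ k : ℕ, uscEnv (fun y => H.u α y + H.tau k y) x :=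
  Ordinal.limitRecOn_add_one _ _ _ _

theorem u_limit (H : CandidateSeq M) {o : Ordinal} (ho : Order.IsSuccLimit o) :
    H.u o = uscEnv (fun y => ⨆ p : {β : Ordinal // β < o}, H.u p.1 y) :=
  Ordinal.limitRecOn_limit _ _ _ _ ho

theorem uscEnv_comp_subtypeVal {U : Set M} (f : M → ℝ≥0∞) {y : U} (hU : U ∈ 𝓝 (y : M)) :
    uscEnv (f ∘ Subtype.val) y = uscEnv f y := by
  rw [uscEnv, uscEnv, ← map_nhds_subtype_coe_eq_nhds y.2 hU, Filter.limsup_comp]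

theorem u_restrict_of_isOpen (H : CandidateSeq M) {U : Set M} (hU : IsOpen U) (γ : Ordinal)
    (y : U) : (H.restrict U).u γ y = H.u γ y := by
  induction γ using Ordinal.limitRecOn generalizing y with
  | zero => rw [u_zero, u_zero]
  | add_one α ih =>
    rw [u_succ, u_succ]
    refine iInf_congr fun k => ?_
    rw [← uscEnv_comp_subtypeVal _ (hU.mem_nhds y.2)]
    congr 1
    funext z
    exact congrArg (· + H.tau k z) (ih z)
  | limit o ho ih =>
    rw [u_limit _ ho, u_limit _ ho, ← uscEnv_comp_subtypeVal _ (hU.mem_nhds y.2)]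
    congr 1
    funext z
    exact iSup_congr fun p => ih p.1 p.2 z

end CandidateSeq

theorem uSeq_restrict_open_general {M : Type*} [TopologicalSpace M] (H : CandidateSeq M) (x : M) (U : Set M)
    (hU : IsOpen U) (hx : x ∈ U) (γ : Ordinal) :
    H.u γ x = (H.restrict U).u γ ⟨x, hx⟩ :=
  (H.u_restrict_of_isOpen hU γ ⟨x, hx⟩).symm

/-- **Locality of the transfinite sequence**: if `U` is an open neighborhood of `x`, then
`u_γ^H(x) = u_γ^{H|_U}(x)`, where `H|_U` is computed in the subspace `U`. -/
theorem uSeq_restrict_open {M : Type*} [TopologicalSpace M] [CompactSpace M]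
    [TopologicalSpace.MetrizableSpace M] (H : CandidateSeq M) (x : M) (U : Set M)
    (hU : IsOpen U) (hx : x ∈ U) (γ : Ordinal) :
    H.u γ x = (H.restrict U).u γ ⟨x, hx⟩ :=
  uSeq_restrict_open_general H x U hU hx γ
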